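/- arXiv:1304.8075 — 3 statements merged into one kernel-verified Lean document; each statement's English description precedes it below -/
import Mathlib

section
/- Let ρ be a Hermitian 3×3 complex matrix. Then ρ is a density matrix with at least one zero eigenvalue (equivalently, a positive semidefinite trace-one matrix with det ρ = 0) if and only if Tr(ρ) = 1, Tr(ρ²) ≤ 1, and 3·Tr(ρ²) − 2·Tr(ρ³) = 1. -/
open ComplexOrder

/-!
With `λ₀ + λ₁ + λ₂ = 1` for the eigenvalues, Newton's identities give
`Tr ρ² = 1 - 2 e₂` and `3 Tr ρ² - 2 Tr ρ³ = 1 - 6 e₃`, so the trace conditions say exactly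
`e₂ ≥ 0` and `det ρ = e₃ = 0`. Conversely, if an eigenvalue `λ` were negative, `e₃ = 0` would
force the product of the other two to vanish, hence `e₂ = λ (1 - λ) < 0`.
-/

namespace Matrix.IsHermitian

variable {n 𝕜 : Type*} [Fintype n] [DecidableEq n] [RCLike 𝕜] {A : Matrix n n 𝕜}

theorem trace_pow_eq_sum_eigenvalues_pow (hA : A.IsHermitian) (k : ℕ) :
    (A ^ k).trace = ∑ i, (hA.eigenvalues i : 𝕜) ^ k := by
  conv_lhs => rw [hA.spectral_theorem]
  rw [← map_pow, Unitary.conjStarAlgAut_apply, trace_mul_cycle, Unitary.coe_star_mul_self,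
    one_mul, diagonal_pow, trace_diagonal]
  simp

theorem re_trace_pow_eq_sum_eigenvalues_pow (hA : A.IsHermitian) (k : ℕ) :
    RCLike.re (A ^ k).trace = ∑ i, hA.eigenvalues i ^ k := by
  rw [hA.trace_pow_eq_sum_eigenvalues_pow, map_sum]
  simp_rw [← RCLike.ofReal_pow, RCLike.ofReal_re]

end Matrix.IsHermitian

section PowerSums

variable {x y z : ℝ}

theorem sum_sq_eq_of_add_eq_one (h : x + y + z = 1) :
    x ^ 2 + y ^ 2 + z ^ 2 = 1 - 2 * (x * y + y * z + z * x) := by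
  obtain rfl : z = 1 - x - y := by linarith
  ring

theorem three_mul_sum_sq_sub_two_mul_sum_cube_of_add_eq_one (h : x + y + z = 1) :
    3 * (x ^ 2 + y ^ 2 + z ^ 2) - 2 * (x ^ 3 + y ^ 3 + z ^ 3) = 1 - 6 * (x * y * z) := by
  obtain rfl : z = 1 - x - y := by linarith
  ring

theorem nonneg_of_add_eq_one_of_mul_eq_zero (h : x + y + z = 1)
    (he₂ : 0 ≤ x * y + y * z + z * x) (he₃ : x * y * z = 0) : 0 ≤ x := by
  by_contra! hx
  have hyz : y * z = 0 := by
    rw [mul_assoc] at he₃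
    exact (mul_eq_zero.mp he₃).resolve_left hx.ne
  nlinarith

theorem nonneg_and_mul_eq_zero_iff_of_add_eq_one (h : x + y + z = 1) :
    ((0 ≤ x ∧ 0 ≤ y ∧ 0 ≤ z) ∧ x * y * z = 0) ↔
      (x ^ 2 + y ^ 2 + z ^ 2 ≤ 1 ∧
        3 * (x ^ 2 + y ^ 2 + z ^ 2) - 2 * (x ^ 3 + y ^ 3 + z ^ 3) = 1) := by
  rw [three_mul_sum_sq_sub_two_mul_sum_cube_of_add_eq_one h, sum_sq_eq_of_add_eq_one h]
  constructor
  · rintro ⟨⟨hx, hy, hz⟩, he₃⟩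
    refine ⟨?_, by rw [he₃]; ring⟩
    nlinarith [mul_nonneg hx hy, mul_nonneg hy hz, mul_nonneg hz hx]
  · rintro ⟨hp₂, hp₃⟩
    have he₂ : 0 ≤ x * y + y * z + z * x := by linarith
    have he₃ : x * y * z = 0 := by linarith
    refine ⟨⟨nonneg_of_add_eq_one_of_mul_eq_zero h he₂ he₃, ?_, ?_⟩, he₃⟩
    · exact nonneg_of_add_eq_one_of_mul_eq_zero (x := y) (y := z) (z := x)
        (by linarith) (by linarith) (by linarith)
    · exact nonneg_of_add_eq_one_of_mul_eq_zero (x := z) (y := x) (z := y)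
        (by linarith) (by linarith) (by linarith)

end PowerSums

/-- A Hermitian 3×3 complex matrix is a density matrix with at least one zero
eigenvalue (equivalently, positive semidefinite with trace 1 and determinant 0)
if and only if Tr(ρ) = 1, Tr(ρ²) ≤ 1, and 3·Tr(ρ²) − 2·Tr(ρ³) = 1. -/
theorem boundary_density_iff_trace_conditions
    (ρ : Matrix (Fin 3) (Fin 3) ℂ) (hρ : ρ.IsHermitian) :
    (ρ.PosSemidef ∧ ρ.trace = 1 ∧ ρ.det = 0) ↔
      (ρ.trace = 1 ∧ ((ρ ^ 2).trace).re ≤ 1 ∧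
        3 * ((ρ ^ 2).trace).re - 2 * ((ρ ^ 3).trace).re = 1) := by
  have htrace : ρ.trace = 1 ↔ ∑ i, hρ.eigenvalues i = 1 := by
    rw [hρ.trace_eq_sum_eigenvalues, ← RCLike.ofReal_sum]; exact Complex.ofReal_eq_one
  have hdet : ρ.det = 0 ↔ ∏ i, hρ.eigenvalues i = 0 := by
    rw [hρ.det_eq_prod_eigenvalues, ← RCLike.ofReal_prod]; exact RCLike.ofReal_eq_zero
  rw [hρ.posSemidef_iff_eigenvalues_nonneg, htrace, hdet]
  simp only [← RCLike.re_to_complex, hρ.re_trace_pow_eq_sum_eigenvalues_pow, Fin.sum_univ_three,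
    Fin.prod_univ_three]
  constructor
  · rintro ⟨hnonneg, hsum, hprod⟩
    exact ⟨hsum, (nonneg_and_mul_eq_zero_iff_of_add_eq_one hsum).1
      ⟨⟨hnonneg 0, hnonneg 1, hnonneg 2⟩, hprod⟩⟩
  · rintro ⟨hsum, hpow⟩
    obtain ⟨⟨h₀, h₁, h₂⟩, hprod⟩ := (nonneg_and_mul_eq_zero_iff_of_add_eq_one hsum).2 hpow
    exact ⟨fun i ↦ by fin_cases i <;> assumption, hsum, hprod⟩
end

section
/- Let {Π_i}_{i=1}^{d²} be a SIC in dimension d ≥ 2 with triple products T_ijk = Tr(Π_iΠ_jΠ_k), and let ρ be a d×d density matrix with SIC probabilities p(i) = Tr(ρΠ_i)/d. Then ρ is a rank-one orthogonal projection (a pure state) if and only if Σ_{i=1}^{d²} p(i)² = 2/(d(d+1)) and Σ_{i,j,k=1}^{d²} Re(T_ijk)·p(i)p(j)p(k) = (d+7)/(d+1)³. -/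
/-!
Since their Gram matrix `(d • 1 + J) / (d + 1)` is invertible, the `d²` projections `Πᵢ` form
a basis of `M_d(ℂ)`, and comparing traces against the `Πᵢ` gives the reconstruction formula
`(d + 1) Σ p(i) Πᵢ = ρ + 1`. Taking traces of its square and cube yields
`Tr ρ² = d (d + 1) Σ p(i)² - 1` and
`Tr ρ³ = (d + 1)³ Σ T_ijk p(i) p(j) p(k) - 3 Tr ρ² - (d + 3)`, so a pure state satisfies both
conditions. Conversely, `Tr ρ = Tr ρ² = 1` forces the eigenvalues `λ ∈ [0, 1]` of `ρ` to satisfy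
`Σ λ (1 - λ) = 0`, so they are one `1` and otherwise `0`.
-/

open ComplexOrder

theorem sq_eq_self_of_sum_eq_one_of_sum_sq_eq_one {ι : Type*} [Fintype ι] {x : ι → ℝ}
    (hx : ∀ i, 0 ≤ x i) (h1 : ∑ i, x i = 1) (h2 : ∑ i, x i ^ 2 = 1) (i : ι) :
    x i ^ 2 = x i := by
  have hle : ∀ i, x i ≤ 1 := fun i =>
    h1 ▸ Finset.single_le_sum (fun j _ => hx j) (Finset.mem_univ i)
  have hzero : ∑ j, (x j - x j ^ 2) = 0 := by rw [Finset.sum_sub_distrib, h1, h2, sub_self]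
  rw [Finset.sum_eq_zero_iff_of_nonneg fun j _ => by nlinarith [hx j, hle j]] at hzero
  linarith [hzero i (Finset.mem_univ i)]

theorem card_ne_zero_eq_one_of_sq_eq_self {ι : Type*} [Fintype ι] {x : ι → ℝ}
    (hx : ∀ i, x i ^ 2 = x i) (h1 : ∑ i, x i = 1) : Fintype.card {i // x i ≠ 0} = 1 := by
  have hone : ∀ i ∈ Finset.univ.filter (x · ≠ 0), x i = 1 := fun i hi =>
    (mul_eq_right₀ (Finset.mem_filter.mp hi).2).mp (sq (x i) ▸ hx i)
  rw [← Finset.sum_filter_ne_zero, Finset.sum_congr rfl hone] at h1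
  rw [Fintype.card_subtype]
  simpa using h1

namespace Matrix

theorem trace_sum_smul_mul_sum_smul_mul_sum_smul {ι n R : Type*} [Fintype ι] [Fintype n]
    [CommRing R] (P : ι → Matrix n n R) (g : ι → R) :
    ((∑ i, g i • P i) * (∑ i, g i • P i) * (∑ i, g i • P i)).trace =
      ∑ i, ∑ j, ∑ k, (P i * P j * P k).trace * g i * g j * g k := by
  rw [Matrix.mul_assoc]
  simp_rw [Finset.sum_mul_sum, Finset.mul_sum, Matrix.smul_mul, Matrix.mul_smul, Matrix.trace_sum,
    Matrix.trace_smul, smul_eq_mul, Matrix.mul_assoc]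
  congr! 3 with i _ j _ k _
  ring

variable {n 𝕜 : Type*} [Fintype n] [DecidableEq n] [RCLike 𝕜]

theorem PosSemidef.mul_self_eq_self_and_rank_eq_one {A : Matrix n n 𝕜} (hA : A.PosSemidef)
    (h1 : A.trace = 1) (h2 : (A * A).trace = 1) : A * A = A ∧ A.rank = 1 := by
  set l := hA.isHermitian.eigenvalues
  set U := Unitary.conjStarAlgAut 𝕜 _ hA.isHermitian.eigenvectorUnitary
  set D : Matrix n n 𝕜 := diagonal (RCLike.ofReal ∘ l)
  have hspec : A = U D := hA.isHermitian.spectral_theorem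
  have hsum : ∑ i, l i = 1 := by
    rw [hA.isHermitian.trace_eq_sum_eigenvalues] at h1
    exact_mod_cast h1
  have hsum_sq : ∑ i, l i ^ 2 = 1 := by
    rw [hspec, ← map_mul, Unitary.conjStarAlgAut_apply, trace_mul_cycle,
      Unitary.coe_star_mul_self, one_mul, diagonal_mul_diagonal, trace_diagonal] at h2
    simp only [Function.comp_apply, ← sq] at h2
    exact_mod_cast h2
  have hl := sq_eq_self_of_sum_eq_one_of_sum_sq_eq_one hA.eigenvalues_nonneg hsum hsum_sq
  refine ⟨?_, ?_⟩
  · have hD : D * D = D := by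
      rw [diagonal_mul_diagonal]
      congr 1
      funext i
      simp only [Function.comp_apply, ← sq]
      exact_mod_cast hl i
    rw [hspec, ← map_mul, hD]
  · rw [hA.isHermitian.rank_eq_card_non_zero_eigs]
    exact card_ne_zero_eq_one_of_sq_eq_self hl hsum

end Matrix

variable {d : ℕ} {ι : Type*}

noncomputable def sicProb (P : ι → Matrix (Fin d) (Fin d) ℂ) (A : Matrix (Fin d) (Fin d) ℂ)
    (i : ι) : ℂ :=
  (A * P i).trace / d

variable [DecidableEq ι]

def IsSICGram (P : ι → Matrix (Fin d) (Fin d) ℂ) : Prop :=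
  ∀ i j, (P i * P j).trace = ((d : ℂ) * (if i = j then 1 else 0) + 1) / ((d : ℂ) + 1)

namespace IsSICGram

variable {P : ι → Matrix (Fin d) (Fin d) ℂ}

theorem trace_eq_one (hP : IsSICGram P) (hproj : ∀ i, P i * P i = P i) (i : ι) :
    (P i).trace = 1 := by
  simpa [hproj, div_self (Nat.cast_add_one_ne_zero (R := ℂ) d)] using hP i i

variable [Fintype ι]

theorem trace_sum_smul_mul (hP : IsSICGram P) (g : ι → ℂ) (j : ι) :
    ((∑ i, g i • P i) * P j).trace = ((d : ℂ) * g j + ∑ i, g i) / ((d : ℂ) + 1) := by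
  simp only [Finset.sum_mul, Matrix.trace_sum, Matrix.smul_mul, Matrix.trace_smul, smul_eq_mul,
    hP _ j, mul_div_assoc', ← Finset.sum_div, mul_add, mul_ite, mul_one, mul_zero,
    Finset.sum_add_distrib, Finset.sum_ite_eq']
  simp [mul_comm]

theorem trace_sum_smul_mul_self (hP : IsSICGram P) (g : ι → ℂ) :
    ((∑ i, g i • P i) * (∑ i, g i • P i)).trace =
      ((d : ℂ) * ∑ i, g i ^ 2 + (∑ i, g i) ^ 2) / ((d : ℂ) + 1) := by
  conv_lhs => rw [Matrix.mul_sum]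
  simp only [Matrix.mul_smul, Matrix.trace_sum, Matrix.trace_smul, hP.trace_sum_smul_mul,
    smul_eq_mul, mul_div_assoc', ← Finset.sum_div, mul_add, Finset.sum_add_distrib]
  rw [Finset.mul_sum, sq, Finset.sum_mul_sum]
  simp only [Finset.mul_sum]
  congr 2
  exact Finset.sum_congr rfl fun i _ => by ring

theorem eq_zero_of_trace_sum_smul_mul_eq_zero (hP : IsSICGram P) (hd : d ≠ 0) {g : ι → ℂ}
    (h : ∀ j, ((∑ i, g i • P i) * P j).trace = 0) : g = 0 := by
  have key : ∀ j, (d : ℂ) * g j + ∑ i, g i = 0 := fun j => by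
    simpa [hP.trace_sum_smul_mul, Nat.cast_add_one_ne_zero] using h j
  have hsum : ∑ i, g i = 0 := by
    have := Finset.sum_eq_zero (s := Finset.univ) fun j _ => key j
    rw [Finset.sum_add_distrib, ← Finset.mul_sum, Finset.sum_const, nsmul_eq_mul, ← add_mul]
      at this
    exact (mul_eq_zero.mp this).resolve_left (by positivity)
  funext j
  simpa [hsum, hd] using key j

theorem linearIndependent (hP : IsSICGram P) (hd : d ≠ 0) : LinearIndependent ℂ P :=
  Fintype.linearIndependent_iff.mpr fun g hg => congrFun <|
    hP.eq_zero_of_trace_sum_smul_mul_eq_zero hd fun j => by simp [hg]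

theorem eq_of_forall_trace_mul_eq (hP : IsSICGram P) (hd : d ≠ 0) (hcard : Fintype.card ι = d ^ 2)
    {A B : Matrix (Fin d) (Fin d) ℂ} (h : ∀ j, (A * P j).trace = (B * P j).trace) : A = B := by
  have hspan := (hP.linearIndependent hd).span_eq_top_of_card_eq_finrank'
    (by simp [hcard, sq, Module.finrank_matrix])
  obtain ⟨g, hg⟩ :=
    (Submodule.mem_span_range_iff_exists_fun ℂ).mp (hspan ▸ Submodule.mem_top : A - B ∈ _)
  have := hP.eq_zero_of_trace_sum_smul_mul_eq_zero hd fun j => by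
    rw [hg, Matrix.sub_mul, Matrix.trace_sub, h, sub_self]
  rw [← sub_eq_zero, ← hg, this]
  simp

theorem sum_eq_smul_one (hP : IsSICGram P) (hproj : ∀ i, P i * P i = P i) (hd : d ≠ 0)
    (hcard : Fintype.card ι = d ^ 2) : ∑ i, P i = (d : ℂ) • 1 := by
  refine hP.eq_of_forall_trace_mul_eq hd hcard fun j => ?_
  have := hP.trace_sum_smul_mul (fun _ => 1) j
  simp only [one_smul] at this
  rw [this, Matrix.smul_mul, Matrix.one_mul, Matrix.trace_smul, hP.trace_eq_one hproj,
    Finset.sum_const, Finset.card_univ, hcard, nsmul_eq_mul, smul_eq_mul]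
  field_simp [Nat.cast_add_one_ne_zero]
  push_cast
  ring

theorem sum_sicProb (hP : IsSICGram P) (hproj : ∀ i, P i * P i = P i) (hd : d ≠ 0)
    (hcard : Fintype.card ι = d ^ 2) (A : Matrix (Fin d) (Fin d) ℂ) :
    ∑ i, sicProb P A i = A.trace := by
  have hd' : (d : ℂ) ≠ 0 := by exact_mod_cast hd
  unfold sicProb
  rw [← Finset.sum_div, ← Matrix.trace_sum, ← Matrix.mul_sum,
    hP.sum_eq_smul_one hproj hd hcard, Matrix.mul_smul, Matrix.mul_one, Matrix.trace_smul,
    smul_eq_mul, mul_div_cancel_left₀ _ hd']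

theorem smul_sum_sicProb_smul (hP : IsSICGram P) (hproj : ∀ i, P i * P i = P i) (hd : d ≠ 0)
    (hcard : Fintype.card ι = d ^ 2) (A : Matrix (Fin d) (Fin d) ℂ) :
    ((d : ℂ) + 1) • ∑ i, sicProb P A i • P i = A + A.trace • 1 := by
  have hd' : (d : ℂ) ≠ 0 := by exact_mod_cast hd
  refine hP.eq_of_forall_trace_mul_eq hd hcard fun j => ?_
  rw [Matrix.smul_mul, Matrix.trace_smul, hP.trace_sum_smul_mul, hP.sum_sicProb hproj hd hcard,
    Matrix.add_mul, Matrix.trace_add, Matrix.smul_mul, Matrix.one_mul, Matrix.trace_smul,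
    hP.trace_eq_one hproj, sicProb, smul_eq_mul, smul_eq_mul]
  field_simp [Nat.cast_add_one_ne_zero]

theorem trace_mul_self_eq (hP : IsSICGram P) (hproj : ∀ i, P i * P i = P i) (hd : d ≠ 0)
    (hcard : Fintype.card ι = d ^ 2) (A : Matrix (Fin d) (Fin d) ℂ) :
    (A * A).trace = d * (d + 1) * ∑ i, sicProb P A i ^ 2 - A.trace ^ 2 := by
  have key := congrArg (fun X => (X * X).trace) (hP.smul_sum_sicProb_smul hproj hd hcard A)
  simp only [Matrix.smul_mul, Matrix.mul_smul, smul_smul, Matrix.trace_smul,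
    hP.trace_sum_smul_mul_self, hP.sum_sicProb hproj hd hcard, Matrix.add_mul, Matrix.mul_add,
    Matrix.trace_add, Matrix.one_mul, Matrix.mul_one, Matrix.trace_one, Fintype.card_fin,
    smul_eq_mul] at key
  field_simp [Nat.cast_add_one_ne_zero] at key
  linear_combination -key

theorem trace_mul_self_mul_self_eq (hP : IsSICGram P) (hproj : ∀ i, P i * P i = P i)
    (hd : d ≠ 0) (hcard : Fintype.card ι = d ^ 2) (A : Matrix (Fin d) (Fin d) ℂ) :
    (A * A * A).trace = (d + 1) ^ 3 * ∑ i, ∑ j, ∑ k,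
        (P i * P j * P k).trace * sicProb P A i * sicProb P A j * sicProb P A k -
      3 * A.trace * (A * A).trace - (d + 3) * A.trace ^ 3 := by
  have key := congrArg (fun X => (X * X * X).trace) (hP.smul_sum_sicProb_smul hproj hd hcard A)
  simp only [Matrix.smul_mul, Matrix.mul_smul, smul_smul, Matrix.trace_smul,
    Matrix.trace_sum_smul_mul_sum_smul_mul_sum_smul, Matrix.add_mul, Matrix.mul_add,
    Matrix.trace_add, Matrix.one_mul, Matrix.mul_one, Matrix.trace_one, Fintype.card_fin,
    smul_eq_mul] at key
  linear_combination -key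

end IsSICGram

theorem sic_pure_state_conditions_general (d : ℕ)
    (P : Fin (d ^ 2) → Matrix (Fin d) (Fin d) ℂ)
    (hproj : ∀ i, P i * P i = P i)
    (hsic : ∀ i j, (P i * P j).trace =
      ((d : ℂ) * (if i = j then 1 else 0) + 1) / ((d : ℂ) + 1))
    (T : Fin (d ^ 2) → Fin (d ^ 2) → Fin (d ^ 2) → ℂ)
    (hT : ∀ i j k, T i j k = (P i * P j * P k).trace)
    (ρ : Matrix (Fin d) (Fin d) ℂ) (hpsd : ρ.PosSemidef) (htr : ρ.trace = 1)
    (p : Fin (d ^ 2) → ℝ) (hp : ∀ i, (p i : ℂ) = (ρ * P i).trace / d) :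
    (ρ * ρ = ρ ∧ ρ.rank = 1) ↔
      ((∑ i, p i ^ 2) = 2 / (d * (d + 1)) ∧
       (∑ i, ∑ j, ∑ k, (T i j k).re * p i * p j * p k) =
         ((d : ℝ) + 7) / ((d : ℝ) + 1) ^ 3) := by
  have hd : d ≠ 0 := by rintro rfl; simp at htr
  have hcard : Fintype.card (Fin (d ^ 2)) = d ^ 2 := Fintype.card_fin _
  have hprob : sicProb P ρ = fun i => (p i : ℂ) := funext fun i => (hp i).symm
  have hsq := IsSICGram.trace_mul_self_eq hsic hproj hd hcard ρ
  have hcube := IsSICGram.trace_mul_self_mul_self_eq hsic hproj hd hcard ρ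
  simp only [hprob, htr, ← hT] at hsq hcube
  have hpos : (d : ℂ) * (d + 1) ≠ 0 :=
    mul_ne_zero (by exact_mod_cast hd) (Nat.cast_add_one_ne_zero d)
  have hpurity : (ρ * ρ).trace = 1 ↔ ∑ i, p i ^ 2 = 2 / (d * (d + 1)) := by
    rw [hsq, ← Complex.ofReal_inj]
    push_cast
    rw [eq_div_iff hpos]
    constructor <;> intro h <;> linear_combination h
  constructor
  · rintro ⟨hidem, -⟩
    have h2 : (ρ * ρ).trace = 1 := by rw [hidem, htr]
    refine ⟨hpurity.mp h2, ?_⟩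
    rw [hidem, hidem, htr] at hcube
    have hcube_sum : (∑ i, ∑ j, ∑ k, T i j k * p i * p j * p k) = ((d + 7) / (d + 1) ^ 3 : ℝ) := by
      push_cast
      rw [eq_div_iff (pow_ne_zero 3 (Nat.cast_add_one_ne_zero (R := ℂ) d))]
      linear_combination -hcube
    simpa only [Complex.re_sum, Complex.re_mul_ofReal, Complex.ofReal_re] using
      congrArg Complex.re hcube_sum
  · rintro ⟨hS, -⟩
    exact hpsd.mul_self_eq_self_and_rank_eq_one htr (hpurity.mpr hS)

/-- For a SIC {Π_i} in dimension d ≥ 2 with triple products T_ijk and a density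
matrix ρ with SIC probabilities p(i) = Tr(ρΠ_i)/d, the state ρ is a rank-one
orthogonal projection (pure) if and only if Σ_i p(i)² = 2/(d(d+1)) and
Σ_{ijk} Re(T_ijk)p(i)p(j)p(k) = (d+7)/(d+1)³. -/
theorem sic_pure_state_conditions (d : ℕ) (hd : 2 ≤ d)
    (P : Fin (d ^ 2) → Matrix (Fin d) (Fin d) ℂ)
    (hherm : ∀ i, (P i).IsHermitian)
    (hproj : ∀ i, P i * P i = P i)
    (hrank : ∀ i, (P i).rank = 1)
    (hsic : ∀ i j, (P i * P j).trace =
      ((d : ℂ) * (if i = j then 1 else 0) + 1) / ((d : ℂ) + 1))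
    (T : Fin (d ^ 2) → Fin (d ^ 2) → Fin (d ^ 2) → ℂ)
    (hT : ∀ i j k, T i j k = (P i * P j * P k).trace)
    (ρ : Matrix (Fin d) (Fin d) ℂ) (hpsd : ρ.PosSemidef) (htr : ρ.trace = 1)
    (p : Fin (d ^ 2) → ℝ) (hp : ∀ i, (p i : ℂ) = (ρ * P i).trace / d) :
    (ρ * ρ = ρ ∧ ρ.rank = 1) ↔
      ((∑ i, p i ^ 2) = 2 / (d * (d + 1)) ∧
       (∑ i, ∑ j, ∑ k, (T i j k).re * p i * p j * p k) =
         ((d : ℝ) + 7) / ((d : ℝ) + 1) ^ 3) :=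
  sic_pure_state_conditions_general d P hproj hsic T hT ρ hpsd htr p hp
end

section
/- Let {Π_a}_{a ∈ (ℤ/3ℤ)²} be the canonical Hesse SIC, let ρ be a 3×3 density matrix, and set p(a) = Tr(ρΠ_a)/3. Then ρ is a rank-one orthogonal projection (a pure state) if and only if Σ_a p(a)² = 1/6 and Σ_a p(a)³ = (1/2)·Σ_{(a,b,c)} p(a)p(b)p(c), where the latter sum ranges over all ordered triples of pairwise distinct points a, b, c ∈ (ℤ/3ℤ)² with a + b + c = 0 (i.e., ordered triples of distinct collinear points of the affine plane of order 3). -/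
open ComplexOrder

/-- ω = e^{2πi/3}. -/
noncomputable def ω : ℂ := Complex.exp (2 * Real.pi * Complex.I / 3)

/-- The shift matrix X on ℂ³: X·e_j = e_{j+1 mod 3}. -/
def Xmat : Matrix (Fin 3) (Fin 3) ℂ :=
  Matrix.of fun i j => if i = j + 1 then 1 else 0

/-- The phase matrix Z on ℂ³: Z·e_j = ω^j·e_j. -/
noncomputable def Zmat : Matrix (Fin 3) (Fin 3) ℂ :=
  Matrix.diagonal fun j => ω ^ (j : ℕ)

/-- The fiducial vector ψ₀ = (0, 1, −1)/√2 of the canonical Hesse SIC. -/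
noncomputable def ψ₀ : Fin 3 → ℂ :=
  fun i => (Real.sqrt 2 : ℂ)⁻¹ * ![0, 1, -1] i

/-- The vectors X^m Z^n ψ₀ of the canonical Hesse SIC. -/
noncomputable def hesseVec (a : ZMod 3 × ZMod 3) : Fin 3 → ℂ :=
  (Xmat ^ a.1.val * Zmat ^ a.2.val).mulVec ψ₀

/-- The projections of the canonical Hesse SIC. -/
noncomputable def hesseProj (a : ZMod 3 × ZMod 3) : Matrix (Fin 3) (Fin 3) ℂ :=
  Matrix.vecMulVec (hesseVec a) (star (hesseVec a))

/-!
Put `α m = ρ (m+1) (m+1) + ρ (m+2) (m+2)`, `β m = ρ (m+1) (m+2)`, `γ m = ρ (m+2) (m+1)`. Then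
`Tr(ρ Π_(m,n)) = (α m - ω ^ n β m - ω ^ 2n γ m) / 2`. Summing squares and cubes of these over the
plane, or products over its lines, and using `1 + ω + ω² = 0` keeps exactly the terms whose powers
of `ω` cancel. For every `ρ` this gives
`Σ p(a)² = (Tr ρ² + (Tr ρ)²) / 12` and
`Σ p(a)³ - ½ Σ_collinear p(a)p(b)p(c) = (Tr ρ³ - (Tr ρ)³) / 24`,
so when `Tr ρ = 1` the two conditions say `Tr ρ² = 1` and `Tr ρ³ = 1`. Both hold for a pure
state. Conversely, the eigenvalues of a density matrix lie in `[0, 1]` and sum to `1`, so `Σ λ² = 1`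
forces each of them to be `0` or `1`.
-/

open Matrix

lemma isPrimitiveRoot_omega : IsPrimitiveRoot ω 3 := by
  simpa [ω] using Complex.isPrimitiveRoot_exp 3 (by norm_num)

lemma omega_sq_add_omega_add_one : ω ^ 2 + ω + 1 = 0 := by
  have h := isPrimitiveRoot_omega.geom_sum_eq_zero (by norm_num)
  simp only [Finset.sum_range_succ, Finset.sum_range_zero] at h
  linear_combination h

lemma conj_omega : (starRingEnd ℂ) ω = ω ^ 2 := by
  rw [← Complex.inv_eq_conj (isPrimitiveRoot_omega.norm'_eq_one (by norm_num))]
  exact inv_eq_of_mul_eq_one_right (by rw [← pow_succ']; exact isPrimitiveRoot_omega.pow_eq_one)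

-- `ZMod 3` is `Fin 3` by definition; indexing by `Fin 3` lets `Fin.sum_univ_three` and the `Fin`
-- simprocs evaluate sums and index arithmetic.
lemma sum_zmod_three_prod {M : Type*} [AddCommMonoid M] (f : ZMod 3 × ZMod 3 → M) :
    ∑ a, f a = ∑ m : Fin 3, ∑ n : Fin 3, f (m, n) :=
  Fintype.sum_prod_type f

section

variable {R : Type*} [CommRing R]

-- The twelve lines of the affine plane over `Fin 3`: the lines `x = m` and `y = n + k x`.
def lineProductSum (t : Fin 3 → Fin 3 → R) : R :=
  ∑ m, t m 0 * t m 1 * t m 2 + ∑ n, ∑ k, t 0 n * t 1 (n + k) * t 2 (n + 2 * k)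

lemma map_lineProductSum {S : Type*} [CommRing S] (f : R →+* S) (t : Fin 3 → Fin 3 → R) :
    f (lineProductSum t) = lineProductSum fun m n => f (t m n) := by
  simp [lineProductSum]

lemma lineProductSum_div {K : Type*} [Field K] (t : Fin 3 → Fin 3 → K) (c : K) :
    lineProductSum (fun m n => t m n / c) = lineProductSum t / c ^ 3 := by
  simp only [lineProductSum, div_mul_div_comm, ← Finset.sum_div, add_div, pow_three, mul_assoc]

lemma sum_collinear_triples (f : ZMod 3 × ZMod 3 → R) :
    ∑ a, ∑ b, ∑ c, (if a ≠ b ∧ a ≠ c ∧ b ≠ c ∧ a + b + c = 0 then f a * f b * f c else 0)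
      = 6 * lineProductSum (fun m n => f (m, n)) := by
  simp only [sum_zmod_three_prod, Fin.sum_univ_three, lineProductSum]
  simp +decide only [if_true, if_false]
  simp only [Fin.reduceAdd, Fin.reduceMul, Fin.isValue]
  ring

def hesseForm (w : R) (α β γ : Fin 3 → R) (m n : Fin 3) : R :=
  α m - w ^ (n : ℕ) * β m - w ^ (2 * (n : ℕ)) * γ m

lemma sum_sq_hesseForm {w : R} (hw : w ^ 2 + w + 1 = 0) (α β γ : Fin 3 → R) :
    ∑ m, ∑ n, hesseForm w α β γ m n ^ 2 = 3 * ∑ m, (α m ^ 2 + 2 * β m * γ m) := by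
  simp only [hesseForm, Fin.sum_univ_three, Fin.isValue, Fin.val_zero, Fin.val_one, Fin.val_two]
  grind

lemma sum_cube_hesseForm_sub_lineProductSum {w : R} (hw : w ^ 2 + w + 1 = 0)
    (α β γ : Fin 3 → R) :
    ∑ m, ∑ n, hesseForm w α β γ m n ^ 3 - 3 * lineProductSum (hesseForm w α β γ) =
      27 * (∑ m, α m * β m * γ m - ∏ m, α m + ∏ m, β m + ∏ m, γ m) := by
  simp only [hesseForm, lineProductSum, Fin.sum_univ_three, Fin.prod_univ_three, Fin.reduceAdd,
    Fin.reduceMul, Fin.isValue, Fin.val_zero, Fin.val_one, Fin.val_two]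
  grind

end

lemma trace_mul_hesseProj (ρ : Matrix (Fin 3) (Fin 3) ℂ) (m n : Fin 3) :
    (ρ * hesseProj (m, n)).trace = hesseForm ω (fun i => ρ (i + 1) (i + 1) + ρ (i + 2) (i + 2))
      (fun i => ρ (i + 1) (i + 2)) (fun i => ρ (i + 2) (i + 1)) m n / 2 := by
  have h2 : (Real.sqrt 2 : ℂ)⁻¹ * (Real.sqrt 2 : ℂ)⁻¹ = 1 / 2 := by
    rw [← mul_inv, ← Complex.ofReal_mul, Real.mul_self_sqrt (by norm_num)]
    norm_num
  fin_cases m <;> fin_cases n <;>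
    simp [hesseForm, hesseProj, hesseVec, ψ₀, Xmat, Zmat, ZMod.val, trace, mul_apply,
      vecMulVec_apply, mulVec, dotProduct, Fin.sum_univ_three, sq, conj_omega] <;>
    grind [isPrimitiveRoot_omega.pow_eq_one]

lemma sum_sq_trace_mul_hesseProj (ρ : Matrix (Fin 3) (Fin 3) ℂ) :
    ∑ a, (ρ * hesseProj a).trace ^ 2 = 3 / 4 * ((ρ * ρ).trace + ρ.trace ^ 2) := by
  simp only [sum_zmod_three_prod, trace_mul_hesseProj, div_pow, ← Finset.sum_div,
    sum_sq_hesseForm omega_sq_add_omega_add_one]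
  simp only [Fin.sum_univ_three, trace_fin_three, mul_apply, Fin.reduceAdd, Fin.isValue]
  ring

lemma sum_cube_trace_mul_hesseProj_sub_lineProductSum (ρ : Matrix (Fin 3) (Fin 3) ℂ) :
    ∑ a, (ρ * hesseProj a).trace ^ 3 -
        3 * lineProductSum (fun m n => (ρ * hesseProj (m, n)).trace) =
      9 / 8 * ((ρ * ρ * ρ).trace - ρ.trace ^ 3) := by
  have h := sum_cube_hesseForm_sub_lineProductSum omega_sq_add_omega_add_one
    (fun i => ρ (i + 1) (i + 1) + ρ (i + 2) (i + 2)) (fun i => ρ (i + 1) (i + 2))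
    (fun i => ρ (i + 2) (i + 1))
  simp only [sum_zmod_three_prod, trace_mul_hesseProj, lineProductSum] at h ⊢
  simp only [Fin.sum_univ_three, Fin.prod_univ_three, trace_fin_three, mul_apply, Fin.reduceAdd,
    Fin.reduceMul, Fin.isValue] at h ⊢
  linear_combination h / 8

section Spectral

variable {𝕜 : Type*} [RCLike 𝕜] {n : Type*} [Fintype n] [DecidableEq n] {A : Matrix n n 𝕜}

lemma Matrix.IsHermitian.sum_eigenvalues_eq_one (hA : A.IsHermitian) (htr : A.trace = 1) :
    ∑ i, hA.eigenvalues i = 1 := by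
  have := hA.trace_eq_sum_eigenvalues
  rw [htr] at this
  exact_mod_cast this.symm

lemma Matrix.IsHermitian.trace_mul_self_eq_sum_eigenvalues_sq (hA : A.IsHermitian) :
    (A * A).trace = ∑ i, ((hA.eigenvalues i ^ 2 : ℝ) : 𝕜) := by
  conv_lhs =>
    rw [hA.spectral_theorem, ← map_mul, trace_map', diagonal_mul_diagonal, trace_diagonal]
  simp [sq]

lemma Matrix.PosSemidef.eigenvalues_eq_zero_or_one (hA : A.PosSemidef) (htr : A.trace = 1)
    (htr2 : (A * A).trace = 1) (i : n) :
    hA.1.eigenvalues i = 0 ∨ hA.1.eigenvalues i = 1 := by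
  set μ := hA.1.eigenvalues
  have hsum : ∑ j, μ j = 1 := hA.1.sum_eigenvalues_eq_one htr
  have hsq : ∑ j, μ j ^ 2 = 1 := by
    have := hA.1.trace_mul_self_eq_sum_eigenvalues_sq
    rw [htr2] at this
    exact_mod_cast this.symm
  have hle : ∀ j, μ j ≤ 1 := fun j =>
    hsum ▸ Finset.single_le_sum (fun k _ => hA.eigenvalues_nonneg k) (Finset.mem_univ j)
  have hzero : ∑ j, μ j * (1 - μ j) = 0 := by
    simp only [mul_sub, mul_one, Finset.sum_sub_distrib, hsum, ← sq, hsq, sub_self]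
  have hi := (Finset.sum_eq_zero_iff_of_nonneg fun j _ =>
    mul_nonneg (hA.eigenvalues_nonneg j) (sub_nonneg.2 (hle j))).1 hzero i (Finset.mem_univ i)
  exact (mul_eq_zero.1 hi).imp id fun h => (sub_eq_zero.1 h).symm

lemma Matrix.PosSemidef.mul_self_eq_self_and_rank_eq_one_s17 (hA : A.PosSemidef)
    (htr : A.trace = 1) (htr2 : (A * A).trace = 1) : A * A = A ∧ A.rank = 1 := by
  have h01 := hA.eigenvalues_eq_zero_or_one htr htr2
  constructor
  · have hD : diagonal (RCLike.ofReal ∘ hA.1.eigenvalues) *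
        diagonal (RCLike.ofReal ∘ hA.1.eigenvalues) =
        (diagonal (RCLike.ofReal ∘ hA.1.eigenvalues) : Matrix n n 𝕜) := by
      rw [diagonal_mul_diagonal]
      congr 1
      ext i
      rcases h01 i with h | h <;> simp [h]
    rw [hA.1.spectral_theorem, ← map_mul, hD]
  · rw [hA.1.rank_eq_card_non_zero_eigs, Fintype.card_subtype]
    have hcard : ((Finset.univ.filter fun i => hA.1.eigenvalues i ≠ 0).card : ℝ) =
        ∑ i, hA.1.eigenvalues i := by
      rw [← Finset.sum_filter_ne_zero, Finset.card_eq_sum_ones, Nat.cast_sum]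
      refine Finset.sum_congr rfl fun i hi => ?_
      rw [(h01 i).resolve_left (Finset.mem_filter.1 hi).2, Nat.cast_one]
    exact_mod_cast hcard.trans (hA.1.sum_eigenvalues_eq_one htr)

end Spectral

lemma sum_sq_eq_one_sixth_iff (ρ : Matrix (Fin 3) (Fin 3) ℂ) (htr : ρ.trace = 1)
    (p : ZMod 3 × ZMod 3 → ℝ) (hp : ∀ a, (p a : ℂ) = (ρ * hesseProj a).trace / 3) :
    ∑ a, p a ^ 2 = 1 / 6 ↔ (ρ * ρ).trace = 1 := by
  rw [← Complex.ofReal_inj]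
  push_cast
  simp only [hp, div_pow, ← Finset.sum_div, sum_sq_trace_mul_hesseProj, htr]
  constructor
  · intro h
    linear_combination 12 * h
  · intro h
    linear_combination h / 12

lemma sum_cube_eq_collinear_sum_iff (ρ : Matrix (Fin 3) (Fin 3) ℂ)
    (htr : ρ.trace = 1) (p : ZMod 3 × ZMod 3 → ℝ)
    (hp : ∀ a, (p a : ℂ) = (ρ * hesseProj a).trace / 3) :
    ((∑ a, p a ^ 3) = (1 / 2) * ∑ a, ∑ b, ∑ c,
      (if a ≠ b ∧ a ≠ c ∧ b ≠ c ∧ a + b + c = 0 then p a * p b * p c else 0)) ↔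
      (ρ * ρ * ρ).trace = 1 := by
  rw [sum_collinear_triples, ← sub_eq_zero, ← Complex.ofReal_eq_zero]
  have key := sum_cube_trace_mul_hesseProj_sub_lineProductSum ρ
  rw [htr] at key
  rw [← Complex.ofRealHom_eq_coe, map_sub, map_sum, map_mul, map_mul, map_lineProductSum]
  simp only [Complex.ofRealHom_eq_coe, map_pow, hp, div_pow, ← Finset.sum_div, lineProductSum_div]
  push_cast
  constructor
  · intro h
    linear_combination 24 * h - 8 / 9 * key
  · intro h
    linear_combination key / 27 + h / 24

/-- A qutrit density matrix ρ with Hesse-SIC probabilities p(a) = Tr(ρΠ_a)/3 is a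
rank-one orthogonal projection (pure) if and only if Σ_a p(a)² = 1/6 and
Σ_a p(a)³ = (1/2)·Σ p(a)p(b)p(c), the latter sum over ordered triples of pairwise
distinct collinear points of the affine plane (ℤ/3ℤ)² (i.e., a + b + c = 0). -/
theorem hesse_sic_pure_state_conditions
    (ρ : Matrix (Fin 3) (Fin 3) ℂ) (hpsd : ρ.PosSemidef) (htr : ρ.trace = 1)
    (p : ZMod 3 × ZMod 3 → ℝ)
    (hp : ∀ a, (p a : ℂ) = (ρ * hesseProj a).trace / 3) :
    (ρ * ρ = ρ ∧ ρ.rank = 1) ↔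
      ((∑ a, p a ^ 2) = 1 / 6 ∧
       (∑ a, p a ^ 3) = (1 / 2) * ∑ a, ∑ b, ∑ c,
          (if a ≠ b ∧ a ≠ c ∧ b ≠ c ∧ a + b + c = 0
           then p a * p b * p c else 0)) := by
  rw [sum_sq_eq_one_sixth_iff ρ htr p hp,
    sum_cube_eq_collinear_sum_iff ρ htr p hp]
  constructor
  · rintro ⟨hidem, -⟩
    exact ⟨by rw [hidem, htr], by rw [hidem, hidem, htr]⟩
  · rintro ⟨htr2, -⟩
    exact hpsd.mul_self_eq_self_and_rank_eq_one_s17 htr htr2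
end
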